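/- Let K be a nonempty convex subset of ℝ² contained in the unit square [0,1]². Then there exists a point c ∈ ℝ² such that the closed disk of radius area(K)/8 centered at c is contained in K. -/

import Mathlib

/-!
Let `C` be the closure of `K` and `P, Q ∈ C` points of least and greatest abscissa. Then `C` lies in
the parallelogram bounded by the vertical lines through `P` and `Q` and by the two support lines of
`C` parallel to `PQ`. Its area is twice the sum of the areas of the triangles `PQX` and `PQX'`,
where `X, X' ∈ C` lie on these support lines, so one of the two triangles has area at least
`area K / 4`. A nondegenerate triangle in the unit square has perimeter less than `4`, so its
inradius `2 · area / perimeter` exceeds `area K / 8`. The incircle lies in the convex set `C`, and a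
slightly smaller concentric disk lies in the interior of `C`, which is the interior of `K`.
-/

open MeasureTheory Pointwise

noncomputable section

abbrev Plane := EuclideanSpace ℝ (Fin 2)

/-- The unit square `[0,1]²` in the plane. -/
def unitSquare : Set Plane := {p : Plane | ∀ i, p i ∈ Set.Icc (0 : ℝ) 1}

open Set

/-- `cross (Q - P) (X - P)` is twice the signed area of the triangle `PQX`. -/
def cross (u v : Plane) : ℝ := u 0 * v 1 - u 1 * v 0

lemma norm_eq_sqrt_sq_add_sq (v : Plane) : ‖v‖ = √(v 0 ^ 2 + v 1 ^ 2) := by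
  simp [EuclideanSpace.norm_eq, Fin.sum_univ_two]

lemma abs_cross_le (u v : Plane) : |cross u v| ≤ ‖u‖ * ‖v‖ := by
  rw [norm_eq_sqrt_sq_add_sq, norm_eq_sqrt_sq_add_sq, ← Real.sqrt_mul (by positivity),
    ← Real.sqrt_sq_eq_abs, cross]
  exact Real.sqrt_le_sqrt (by nlinarith [sq_nonneg (u 0 * v 0 + u 1 * v 1)])

lemma cross_sub_sub_rotate (P Q X : Plane) : cross (X - Q) (P - Q) = cross (Q - P) (X - P) := by
  simp only [cross, PiLp.sub_apply]; ring

lemma Convex.mem_of_cross_nonneg {T : Set Plane} (hT : Convex ℝ T) {P Q X y : Plane}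
    (hP : P ∈ T) (hQ : Q ∈ T) (hX : X ∈ T) (hS : 0 < cross (Q - P) (X - P))
    (hyP : 0 ≤ cross (Q - y) (X - y)) (hyQ : 0 ≤ cross (X - y) (P - y))
    (hyX : 0 ≤ cross (P - y) (Q - y)) : y ∈ T := by
  set S := cross (Q - P) (X - P)
  set a := cross (Q - y) (X - y)
  set b := cross (X - y) (P - y)
  set c := cross (P - y) (Q - y)
  have hsum : a + b + c = S := by simp only [a, b, c, S, cross, PiLp.sub_apply]; ring
  -- `a / S`, `b / S`, `c / S` are the barycentric coordinates of `y`.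
  have hy : y = (a / S) • P + (b / S) • Q + (c / S) • X := by
    ext i
    simp only [a, b, c, S, cross, PiLp.add_apply, PiLp.smul_apply, PiLp.sub_apply,
      smul_eq_mul] at hS ⊢
    field_simp
    fin_cases i <;> (simp only [Fin.zero_eta, Fin.mk_one]; ring)
  have hmem := hT.sum_mem (t := Finset.univ) (w := ![a / S, b / S, c / S]) (z := ![P, Q, X])
    (by
      simp only [Finset.mem_univ, forall_const, Fin.forall_fin_succ, Matrix.cons_val_zero,
        Matrix.cons_val_succ, Matrix.cons_val_fin_one]
      exact ⟨by positivity, by positivity, by positivity⟩)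
    (by simp [Fin.sum_univ_three, ← add_div, hsum, hS.ne'])
    (by simp [Fin.forall_fin_succ, hP, hQ, hX])
  simpa [Fin.sum_univ_three, ← hy] using hmem

def perimeter (P Q X : Plane) : ℝ := dist P Q + dist Q X + dist X P

def incenter (P Q X : Plane) : Plane :=
  (perimeter P Q X)⁻¹ • (dist Q X • P + dist X P • Q + dist P Q • X)

lemma perimeter_rotate (P Q X : Plane) : perimeter Q X P = perimeter P Q X := by
  simp only [perimeter]; ring

lemma incenter_rotate (P Q X : Plane) : incenter Q X P = incenter P Q X := by
  rw [incenter, incenter, perimeter_rotate]; congr 1; abel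

lemma cross_sub_incenter {P Q X : Plane} (hp : perimeter P Q X ≠ 0) :
    cross (Q - incenter P Q X) (X - incenter P Q X) =
      dist Q X / perimeter P Q X * cross (Q - P) (X - P) := by
  have hp' : dist P Q + dist Q X + dist X P ≠ 0 := hp
  simp only [incenter, perimeter, cross, PiLp.sub_apply, PiLp.smul_apply, PiLp.add_apply,
    smul_eq_mul]
  field_simp
  ring

/-- The radius `cross (Q - P) (X - P) / perimeter P Q X` is the distance from the incenter to the
line `QX`. -/
lemma cross_nonneg_of_mem_closedBall_incenter {P Q X y : Plane} (hp : perimeter P Q X ≠ 0)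
    (hy : y ∈ Metric.closedBall (incenter P Q X) (cross (Q - P) (X - P) / perimeter P Q X)) :
    0 ≤ cross (Q - y) (X - y) := by
  set I := incenter P Q X
  have hsplit : cross (Q - y) (X - y) = cross (Q - I) (X - I) - cross (y - I) (X - Q) := by
    simp only [cross, PiLp.sub_apply]; ring
  have hbound := abs_cross_le (y - I) (X - Q)
  rw [← dist_eq_norm, ← dist_eq_norm, dist_comm X] at hbound
  rw [hsplit, cross_sub_incenter hp]
  have hdist :=
    mul_le_mul_of_nonneg_right (Metric.mem_closedBall.1 hy) (dist_nonneg (x := Q) (y := X))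
  have hcomm : dist Q X / perimeter P Q X * cross (Q - P) (X - P) =
      cross (Q - P) (X - P) / perimeter P Q X * dist Q X := by ring
  linarith [le_abs_self (cross (y - I) (X - Q))]

lemma perimeter_pos {P Q X : Plane} (hS : cross (Q - P) (X - P) ≠ 0) : 0 < perimeter P Q X := by
  have hPQ : P ≠ Q := by rintro rfl; simp [cross] at hS
  have hPQ_pos := dist_pos.2 hPQ
  unfold perimeter
  positivity

lemma Convex.closedBall_incenter_subset {T : Set Plane} (hT : Convex ℝ T) {P Q X : Plane}
    (hP : P ∈ T) (hQ : Q ∈ T) (hX : X ∈ T) (hS : 0 < cross (Q - P) (X - P)) :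
    Metric.closedBall (incenter P Q X) (cross (Q - P) (X - P) / perimeter P Q X) ⊆ T := by
  intro y hy
  have hp := (perimeter_pos hS.ne').ne'
  refine hT.mem_of_cross_nonneg hP hQ hX hS (cross_nonneg_of_mem_closedBall_incenter hp hy) ?_ ?_
  · refine cross_nonneg_of_mem_closedBall_incenter (by rwa [perimeter_rotate]) ?_
    rwa [incenter_rotate, perimeter_rotate, cross_sub_sub_rotate]
  · refine cross_nonneg_of_mem_closedBall_incenter (by rwa [perimeter_rotate, perimeter_rotate]) ?_
    rwa [incenter_rotate, incenter_rotate, perimeter_rotate, perimeter_rotate,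
      cross_sub_sub_rotate, cross_sub_sub_rotate]

lemma norm_le_abs_add_abs (v : Plane) : ‖v‖ ≤ |v 0| + |v 1| := by
  rw [norm_eq_sqrt_sq_add_sq, Real.sqrt_le_left (by positivity)]
  nlinarith [sq_abs (v 0), sq_abs (v 1), abs_nonneg (v 0), abs_nonneg (v 1)]

lemma norm_lt_abs_add_abs {v : Plane} (hv : v 0 * v 1 ≠ 0) : ‖v‖ < |v 0| + |v 1| := by
  have hpos := abs_pos.2 hv
  rw [abs_mul] at hpos
  rw [norm_eq_sqrt_sq_add_sq, Real.sqrt_lt' (by nlinarith [abs_nonneg (v 0), abs_nonneg (v 1)])]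
  nlinarith [sq_abs (v 0), sq_abs (v 1), abs_mul (v 0) (v 1)]

lemma abs_sub_add_abs_sub_add_abs_sub_le_two {a b c : ℝ} (ha : a ∈ Icc (0 : ℝ) 1)
    (hb : b ∈ Icc (0 : ℝ) 1) (hc : c ∈ Icc (0 : ℝ) 1) : |a - b| + |b - c| + |c - a| ≤ 2 := by
  obtain ⟨ha0, ha1⟩ := ha; obtain ⟨hb0, hb1⟩ := hb; obtain ⟨hc0, hc1⟩ := hc
  rcases abs_cases (a - b) with ⟨h1, _⟩ | ⟨h1, _⟩ <;>
  rcases abs_cases (b - c) with ⟨h2, _⟩ | ⟨h2, _⟩ <;>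
  rcases abs_cases (c - a) with ⟨h3, _⟩ | ⟨h3, _⟩ <;> linarith

lemma cross_eq_zero_of_sides_axis_parallel {P Q X : Plane} (hPQ : (P - Q) 0 * (P - Q) 1 = 0)
    (hQX : (Q - X) 0 * (Q - X) 1 = 0) (hXP : (X - P) 0 * (X - P) 1 = 0) :
    cross (Q - P) (X - P) = 0 := by
  simp only [cross, PiLp.sub_apply] at *
  nlinarith

lemma perimeter_lt_four {P Q X : Plane} (hP : P ∈ unitSquare) (hQ : Q ∈ unitSquare)
    (hX : X ∈ unitSquare) (hS : cross (Q - P) (X - P) ≠ 0) : perimeter P Q X < 4 := by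
  have hcoord (i : Fin 2) : |(P - Q) i| + |(Q - X) i| + |(X - P) i| ≤ 2 :=
    abs_sub_add_abs_sub_add_abs_sub_le_two (hP i) (hQ i) (hX i)
  obtain h | h | h : (P - Q) 0 * (P - Q) 1 ≠ 0 ∨ (Q - X) 0 * (Q - X) 1 ≠ 0 ∨
      (X - P) 0 * (X - P) 1 ≠ 0 := by
    by_contra! h
    exact hS (cross_eq_zero_of_sides_axis_parallel h.1 h.2.1 h.2.2)
  all_goals
    simp only [perimeter, dist_eq_norm]
    linarith [hcoord 0, hcoord 1, norm_lt_abs_add_abs h, norm_le_abs_add_abs (P - Q),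
      norm_le_abs_add_abs (Q - X), norm_le_abs_add_abs (X - P)]

lemma volume_box (α β γ δ : ℝ) :
    volume {z : Plane | z 0 ∈ Icc α β ∧ z 1 ∈ Icc γ δ} =
      ENNReal.ofReal (β - α) * ENNReal.ofReal (δ - γ) := by
  have hbox : {z : Plane | z 0 ∈ Icc α β ∧ z 1 ∈ Icc γ δ} =
      (MeasurableEquiv.toLp 2 (Fin 2 → ℝ)).symm ⁻¹' univ.pi ![Icc α β, Icc γ δ] := by
    ext z
    simp [Fin.forall_fin_two]
  rw [hbox, (EuclideanSpace.volume_preserving_symm_measurableEquiv_toLp (Fin 2)).measure_preimage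
    (MeasurableSet.univ_pi fun i => by fin_cases i <;> exact measurableSet_Icc).nullMeasurableSet,
    volume_pi_pi]
  simp [Fin.prod_univ_two, Real.volume_Icc]

lemma volume_slab {u : Plane} (hu : u 0 ≠ 0) (α β γ δ : ℝ) :
    volume {y : Plane | y 0 ∈ Icc α β ∧ cross u y ∈ Icc γ δ} =
      ENNReal.ofReal |u 0|⁻¹ * (ENNReal.ofReal (β - α) * ENNReal.ofReal (δ - γ)) := by
  let f : Plane →ₗ[ℝ] Plane := Matrix.toEuclideanLin !![1, 0; -u 1, u 0]
  have hdet : LinearMap.det f = u 0 := by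
    simp [f, Matrix.toLpLin_eq_toLin, LinearMap.det_toLin, Matrix.det_fin_two_of]
  have hslab : {y : Plane | y 0 ∈ Icc α β ∧ cross u y ∈ Icc γ δ} =
      f ⁻¹' {z : Plane | z 0 ∈ Icc α β ∧ z 1 ∈ Icc γ δ} := by
    have hf0 (y : Plane) : f y 0 = y 0 := by
      simp [f, Matrix.toEuclideanLin, Matrix.mulVec, dotProduct, Fin.sum_univ_two]
    have hf1 (y : Plane) : f y 1 = cross u y := by
      simp [f, cross, Matrix.toEuclideanLin, Matrix.mulVec, dotProduct, Fin.sum_univ_two]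
      ring
    ext y
    simp only [mem_ofPred_eq, mem_preimage, hf0, hf1]
  rw [hslab, Measure.addHaar_preimage_linearMap volume (by rwa [hdet]), hdet, volume_box,
    abs_inv]

lemma IsCompact.exists_volume_le_two_mul_cross {C : Set Plane} (hC : IsCompact C)
    (hne : C.Nonempty) :
    ∃ P ∈ C, ∃ Q ∈ C, ∃ X ∈ C, volume C ≤ ENNReal.ofReal (2 * cross (Q - P) (X - P)) := by
  have hcoord (i : Fin 2) : ContinuousOn (fun y : Plane => y i) C := by fun_prop
  obtain ⟨P, hP, hPmin⟩ := hC.exists_isMinOn hne (hcoord 0)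
  obtain ⟨Q, hQ, hQmax⟩ := hC.exists_isMaxOn hne (hcoord 0)
  rcases (show P 0 ≤ Q 0 from hPmin hQ).eq_or_lt with hPQ | hPQ
  · obtain ⟨R, -, hRmin⟩ := hC.exists_isMinOn hne (hcoord 1)
    obtain ⟨T, -, hTmax⟩ := hC.exists_isMaxOn hne (hcoord 1)
    have hsingle (y : Plane) : cross (EuclideanSpace.single 0 1) y = y 1 := by simp [cross]
    refine ⟨P, hP, P, hP, P, hP, le_of_le_of_eq (b := 0) ?_ (by simp [cross])⟩
    calc volume C ≤ volume {y : Plane | y 0 ∈ Icc (P 0) (Q 0) ∧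
          cross (EuclideanSpace.single 0 1) y ∈ Icc (R 1) (T 1)} :=
          measure_mono fun y hy =>
            ⟨⟨hPmin hy, hQmax hy⟩, by simpa [hsingle] using ⟨hRmin hy, hTmax hy⟩⟩
      _ = 0 := by rw [volume_slab (by simp), hPQ]; simp
  · have hcross : ContinuousOn (cross (Q - P)) C := by unfold cross; fun_prop
    obtain ⟨Xmax, hXmax, hmax⟩ := hC.exists_isMaxOn hne hcross
    obtain ⟨Xmin, hXmin, hmin⟩ := hC.exists_isMinOn hne hcross
    have hvol : volume C ≤ ENNReal.ofReal (cross (Q - P) Xmax - cross (Q - P) Xmin) := by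
      calc volume C ≤ volume {y : Plane | y 0 ∈ Icc (P 0) (Q 0) ∧
            cross (Q - P) y ∈ Icc (cross (Q - P) Xmin) (cross (Q - P) Xmax)} :=
            measure_mono fun y hy => ⟨⟨hPmin hy, hQmax hy⟩, hmin hy, hmax hy⟩
        _ = _ := by
          have hu : 0 < Q 0 - P 0 := sub_pos.2 hPQ
          rw [volume_slab (by simpa using hu.ne'), PiLp.sub_apply, abs_of_pos hu, ← mul_assoc,
            ← ENNReal.ofReal_mul (by positivity), inv_mul_cancel₀ hu.ne', ENNReal.ofReal_one,
            one_mul]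
    have hsplit : cross (Q - P) Xmax - cross (Q - P) Xmin =
        cross (Q - P) (Xmax - P) + cross (P - Q) (Xmin - Q) := by
      simp only [cross, PiLp.sub_apply]; ring
    rcases le_total (cross (Q - P) (Xmax - P)) (cross (P - Q) (Xmin - Q)) with h | h
    · exact ⟨Q, hQ, P, hP, Xmin, hXmin, hvol.trans (ENNReal.ofReal_le_ofReal (by linarith))⟩
    · exact ⟨P, hP, Q, hQ, Xmax, hXmax, hvol.trans (ENNReal.ofReal_le_ofReal (by linarith))⟩

lemma isClosed_unitSquare : IsClosed unitSquare := by
  simp only [unitSquare, ofPred_forall]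
  exact isClosed_iInter fun i => isClosed_Icc.preimage (by fun_prop)

lemma isCompact_unitSquare : IsCompact unitSquare := by
  refine Metric.isCompact_of_isClosed_isBounded isClosed_unitSquare
    ((Metric.isBounded_closedBall (x := 0) (r := 2)).subset fun p hp => ?_)
  rw [mem_closedBall_zero_iff]
  linarith [norm_le_abs_add_abs p, abs_le.2 ⟨by linarith [(hp 0).1], (hp 0).2⟩,
    abs_le.2 ⟨by linarith [(hp 1).1], (hp 1).2⟩]

section Convex

variable {E : Type*} [NormedAddCommGroup E] [NormedSpace ℝ E] {s : Set E}

lemma Convex.interior_nonempty_of_addHaar_ne_zero [MeasurableSpace E] [BorelSpace E]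
    [FiniteDimensional ℝ E] {μ : Measure E} [μ.IsAddHaarMeasure] (hs : Convex ℝ s)
    (h : μ s ≠ 0) : (interior s).Nonempty := by
  rw [hs.interior_nonempty_iff_affineSpan_eq_top]
  by_contra hspan
  exact h (measure_mono_null (subset_affineSpan ℝ s) (Measure.addHaar_affineSubspace μ _ hspan))

open Metric in
lemma Convex.closedBall_subset_of_closedBall_subset_closure (hs : Convex ℝ s)
    (hint : (interior s).Nonempty) {c : E} {r r' : ℝ} (hr : r' < r)
    (hsub : closedBall c r ⊆ closure s) : closedBall c r' ⊆ s :=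
  calc closedBall c r' ⊆ ball c r := closedBall_subset_ball hr
    _ ⊆ interior (closure s) := interior_maximal (ball_subset_closedBall.trans hsub) isOpen_ball
    _ = interior s := hs.interior_closure_eq_interior_of_nonempty_interior hint
    _ ⊆ s := interior_subset

end Convex

theorem big_inner_ball (K : Set Plane) (hne : K.Nonempty) (hconv : Convex ℝ K)
    (hsub : K ⊆ unitSquare) :
    ∃ c : Plane, Metric.closedBall c ((volume K).toReal / 8) ⊆ K := by
  obtain ⟨x, hx⟩ := hne
  rcases (ENNReal.toReal_nonneg : 0 ≤ (volume K).toReal).eq_or_lt with hA | hA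
  · exact ⟨x, by rw [← hA, zero_div, Metric.closedBall_zero]; exact singleton_subset_iff.2 hx⟩
  have hclosure : closure K ⊆ unitSquare := closure_minimal hsub isClosed_unitSquare
  obtain ⟨P, hP, Q, hQ, X, hX, hvol⟩ := (isCompact_unitSquare.of_isClosed_subset isClosed_closure
    hclosure).exists_volume_le_two_mul_cross ⟨x, subset_closure hx⟩
  set S := cross (Q - P) (X - P)
  have hAS : (volume K).toReal ≤ 2 * S := by
    have := ENNReal.toReal_mono ENNReal.ofReal_ne_top ((measure_mono subset_closure).trans hvol)
    rw [ENNReal.toReal_ofReal'] at this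
    exact (le_max_iff.1 this).resolve_right hA.not_ge
  have hS : 0 < S := by linarith
  have hr : (volume K).toReal / 8 < S / perimeter P Q X :=
    calc _ ≤ S / 4 := by linarith
      _ < _ := div_lt_div_of_pos_left hS (perimeter_pos hS.ne')
        (perimeter_lt_four (hclosure hP) (hclosure hQ) (hclosure hX) hS.ne')
  exact ⟨incenter P Q X, hconv.closedBall_subset_of_closedBall_subset_closure
    (hconv.interior_nonempty_of_addHaar_ne_zero (ENNReal.toReal_pos_iff.1 hA).1.ne') hr
    (hconv.closure.closedBall_incenter_subset hP hQ hX hS)⟩
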